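/- Suppose f : ℝ² → 𝔽² preserves every distance d > 0 with d² rational. If A, B, C, D ∈ ℝ², r ∈ ℚ, and D - C = r·(B - A), then f(D) - f(C) = r·(f(B) - f(A)). -/

import Mathlib

/-!
Over a field of characteristic `≠ 2`, a point at squared distance `a ≠ 0` from two points at
squared distance `4a` from each other is their midpoint, and two points at squared distance `a`
from both of `P₁ ≠ P₂` either coincide or have the same midpoint as `P₁, P₂`.

The first fact shows that `f` sends the midpoint of a segment with rational squared length to the
midpoint of the image. For an arbitrary segment `xy` pick `c` with `|xc|² = |yc|² = α ∈ ℚ`,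
`α > |xy|² / 4`: the midpoint `m` of `xy`, the midpoints `m₁, m₂` of `xc, yc`, and `c` form a
rhombus of side `α / 4`. As `f` is injective (there are points at squared distances `q` and `q + 1`
from any two given points) and `m ≠ c`, the second fact gives `f m + f c = f m₁ + f m₂`, which
makes `f m` the midpoint of `f x, f y`. Hence `f - f 0` preserves midpoints, so it is additive and
therefore `ℚ`-linear.
-/

section CommRing
variable {R : Type*} [CommRing R]

def sqDist (u v : R × R) : R := (u.1 - v.1) ^ 2 + (u.2 - v.2) ^ 2

lemma sqDist_comm (u v : R × R) : sqDist u v = sqDist v u := by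
  simp only [sqDist]; ring

@[simp] lemma sqDist_self (u : R × R) : sqDist u u = 0 := by
  simp [sqDist]

end CommRing

section Field
variable {K : Type*} [Field K]

/-- A point equidistant from `P₁ ≠ P₂` lies on the perpendicular bisector:
`2 • Y = P₁ + P₂ + t • J (P₂ - P₁)` with `J` the quarter turn `(u, v) ↦ (-v, u)`. -/
lemma exists_of_sqDist_eq_sqDist {P₁ P₂ Y : K × K} (hP : P₁ ≠ P₂)
    (hY : sqDist Y P₁ = sqDist Y P₂) :
    ∃ t : K, 2 * Y.1 - P₁.1 - P₂.1 = -(P₂.2 - P₁.2) * t ∧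
      2 * Y.2 - P₁.2 - P₂.2 = (P₂.1 - P₁.1) * t ∧
      4 * sqDist Y P₁ = (t ^ 2 + 1) * sqDist P₁ P₂ := by
  have hperp : (P₂.1 - P₁.1) * (2 * Y.1 - P₁.1 - P₂.1)
      + (P₂.2 - P₁.2) * (2 * Y.2 - P₁.2 - P₂.2) = 0 := by
    simp only [sqDist] at hY
    linear_combination hY
  suffices ∃ t : K, 2 * Y.1 - P₁.1 - P₂.1 = -(P₂.2 - P₁.2) * t ∧
      2 * Y.2 - P₁.2 - P₂.2 = (P₂.1 - P₁.1) * t by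
    obtain ⟨t, h₁, h₂⟩ := this
    refine ⟨t, h₁, h₂, ?_⟩
    simp only [sqDist]
    linear_combination (2 * Y.1 - P₁.1 - P₂.1 + 2 * (P₂.1 - P₁.1) - (P₂.2 - P₁.2) * t) * h₁
      + (2 * Y.2 - P₁.2 - P₂.2 + 2 * (P₂.2 - P₁.2) + (P₂.1 - P₁.1) * t) * h₂
  by_cases h₁ : P₂.1 - P₁.1 = 0
  · have h₂ : P₂.2 - P₁.2 ≠ 0 := fun h₂ =>
      hP (Prod.ext (sub_eq_zero.1 h₁).symm (sub_eq_zero.1 h₂).symm)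
    refine ⟨-(2 * Y.1 - P₁.1 - P₂.1) / (P₂.2 - P₁.2), by field_simp, ?_⟩
    rw [h₁, zero_mul, zero_add] at hperp
    rw [h₁, zero_mul]
    exact (mul_eq_zero.1 hperp).resolve_left h₂
  · refine ⟨(2 * Y.2 - P₁.2 - P₂.2) / (P₂.1 - P₁.1), ?_, by field_simp⟩
    field_simp
    linear_combination hperp

variable [NeZero (2 : K)]

lemma four_mul_ne_zero {a : K} (ha : a ≠ 0) : 4 * a ≠ 0 := by
  rw [show (4 : K) = 2 * 2 by norm_num]
  exact mul_ne_zero (mul_ne_zero two_ne_zero two_ne_zero) ha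

lemma add_self_eq_add_of_sqDist_eq {P₁ P₂ Y : K × K} {a : K} (ha : a ≠ 0)
    (h₁ : sqDist Y P₁ = a) (h₂ : sqDist Y P₂ = a) (h₁₂ : sqDist P₁ P₂ = 4 * a) :
    Y + Y = P₁ + P₂ := by
  have hP : P₁ ≠ P₂ := fun h => four_mul_ne_zero ha (by rw [← h₁₂, h, sqDist_self])
  obtain ⟨t, ht₁, ht₂, ht⟩ := exists_of_sqDist_eq_sqDist hP (h₁.trans h₂.symm)
  have ht0 : t = 0 := by
    rw [h₁, h₁₂] at ht
    have : t ^ 2 * (4 * a) = 0 := by linear_combination -ht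
    exact pow_eq_zero_iff two_ne_zero |>.1 <| (mul_eq_zero.1 this).resolve_right
      (four_mul_ne_zero ha)
  rw [ht0] at ht₁ ht₂
  exact Prod.ext (by simp only [Prod.fst_add]; linear_combination ht₁)
    (by simp only [Prod.snd_add]; linear_combination ht₂)

lemma eq_or_add_eq_add_of_sqDist_eq {P₁ P₂ Y Z : K × K} {a : K} (ha : a ≠ 0) (hP : P₁ ≠ P₂)
    (hY₁ : sqDist Y P₁ = a) (hY₂ : sqDist Y P₂ = a)
    (hZ₁ : sqDist Z P₁ = a) (hZ₂ : sqDist Z P₂ = a) :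
    Y = Z ∨ Y + Z = P₁ + P₂ := by
  obtain ⟨t, ht₁, ht₂, ht⟩ := exists_of_sqDist_eq_sqDist hP (hY₁.trans hY₂.symm)
  obtain ⟨s, hs₁, hs₂, hs⟩ := exists_of_sqDist_eq_sqDist hP (hZ₁.trans hZ₂.symm)
  have hP₁₂ : sqDist P₁ P₂ ≠ 0 := fun h => four_mul_ne_zero ha (by rw [← hY₁, ht, h, mul_zero])
  have hts : t ^ 2 = s ^ 2 :=
    mul_right_cancel₀ hP₁₂ (by linear_combination hs - ht + (hY₁.trans hZ₁.symm) * 4)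
  have h2 : (2 : K) ≠ 0 := two_ne_zero
  rcases sq_eq_sq_iff_eq_or_eq_neg.1 hts with rfl | rfl
  · exact .inl (Prod.ext (mul_left_cancel₀ h2 (by linear_combination ht₁ - hs₁))
      (mul_left_cancel₀ h2 (by linear_combination ht₂ - hs₂)))
  · refine .inr (Prod.ext (mul_left_cancel₀ h2 ?_) (mul_left_cancel₀ h2 ?_))
    · simp only [Prod.fst_add]; linear_combination ht₁ + hs₁
    · simp only [Prod.snd_add]; linear_combination ht₂ + hs₂

end Field

lemma sqDist_pos_iff {R : Type*} [CommRing R] [LinearOrder R] [IsStrictOrderedRing R]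
    {x y : R × R} : 0 < sqDist x y ↔ x ≠ y := by
  refine ⟨fun h hxy => by simp [hxy] at h, fun hxy => ?_⟩
  have : x.1 - y.1 ≠ 0 ∨ x.2 - y.2 ≠ 0 := by
    by_contra! h
    exact hxy (Prod.ext (sub_eq_zero.1 h.1) (sub_eq_zero.1 h.2))
  rcases this with h | h <;> simp only [sqDist] <;> positivity

section Midpoint
variable {K : Type*} [Field K] [CharZero K] (x y z : K × K)

lemma sqDist_midpoint_left : sqDist (midpoint K x y) x = sqDist x y / 4 := by
  simp [sqDist, midpoint_eq_smul_add]; ring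

lemma sqDist_midpoint_right : sqDist (midpoint K x y) y = sqDist x y / 4 := by
  simp [sqDist, midpoint_eq_smul_add]; ring

lemma sqDist_right_midpoint : sqDist y (midpoint K x y) = sqDist x y / 4 := by
  simp [sqDist, midpoint_eq_smul_add]; ring

lemma sqDist_midpoint_midpoint_left :
    sqDist (midpoint K x y) (midpoint K x z) = sqDist y z / 4 := by
  simp [sqDist, midpoint_eq_smul_add]; ring

end Midpoint

lemma midpoint_eq_of_add_self_eq {R V : Type*} [Ring R] [Invertible (2 : R)] [AddCommGroup V]
    [Module R V] {x y z : V} (h : z + z = x + y) : midpoint R x y = z := by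
  rw [midpoint_eq_smul_add, ← h, ← two_smul R z, smul_smul, invOf_mul_self, one_smul]

lemma exists_sqDist_eq_sqDist_eq {x y : ℝ × ℝ} (hxy : x ≠ y) {α β : ℝ}
    (h : (α - β + sqDist x y) ^ 2 ≤ 4 * α * sqDist x y) :
    ∃ z, sqDist x z = α ∧ sqDist y z = β := by
  have hρ : 0 < sqDist x y := sqDist_pos_iff.2 hxy
  set ρ := sqDist x y with hρ_def
  set s := (α - β + ρ) / (2 * ρ)
  set σ := √(4 * α * ρ - (α - β + ρ) ^ 2) / (2 * ρ)
  have hs : s * (2 * ρ) = α - β + ρ := div_mul_cancel₀ _ (by positivity)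
  have hσ : σ ^ 2 * (2 * ρ) ^ 2 = 4 * α * ρ - (α - β + ρ) ^ 2 := by
    rw [div_pow, Real.sq_sqrt (by linarith), div_mul_cancel₀ _ (by positivity)]
  -- `z = x + s • (y - x) + σ • J (y - x)`, with `J` the quarter turn
  let z : ℝ × ℝ :=
    (x.1 + s * (y.1 - x.1) - σ * (y.2 - x.2), x.2 + s * (y.2 - x.2) + σ * (y.1 - x.1))
  have hxz : sqDist x z = (s ^ 2 + σ ^ 2) * ρ := by simp only [z, sqDist, hρ_def]; ring
  have hyz : sqDist y z = ((1 - s) ^ 2 + σ ^ 2) * ρ := by simp only [z, sqDist, hρ_def]; ring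
  have h4ρ : (2 * ρ) ^ 2 ≠ 0 := by positivity
  refine ⟨z, mul_right_cancel₀ h4ρ ?_, mul_right_cancel₀ h4ρ ?_⟩
  · rw [hxz]; linear_combination ρ * hσ + ρ * (s * (2 * ρ) + (α - β + ρ)) * hs
  · rw [hyz]; linear_combination ρ * hσ + ρ * (s * (2 * ρ) + (α - β + ρ) - 4 * ρ) * hs

def PreservesRatSqDist {F : Type*} [Field F] (f : ℝ × ℝ → F × F) : Prop :=
  ∀ (x y : ℝ × ℝ) (q : ℚ), sqDist x y = q → sqDist (f x) (f y) = q

namespace PreservesRatSqDist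

theorem of_sqrt {F : Type*} [Field F] [Algebra ℝ F] {f : ℝ × ℝ → F × F}
    (hf : ∀ d : ℝ, 0 < d → (∃ q : ℚ, (q : ℝ) = d ^ 2) →
      ∀ x y : ℝ × ℝ, Real.sqrt ((x.1 - y.1) ^ 2 + (x.2 - y.2) ^ 2) = d →
        ((f x).1 - (f y).1) ^ 2 + ((f x).2 - (f y).2) ^ 2 = algebraMap ℝ F (d ^ 2)) :
    PreservesRatSqDist f := by
  intro x y q hq
  by_cases hxy : x = y
  · subst hxy
    obtain rfl : q = 0 := by exact_mod_cast (hq.symm.trans (sqDist_self x))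
    simp
  have hd2 : √(sqDist x y) ^ 2 = q := by rw [Real.sq_sqrt (sqDist_pos_iff.2 hxy).le, hq]
  have := hf _ (Real.sqrt_pos.2 (sqDist_pos_iff.2 hxy)) ⟨q, hd2.symm⟩ x y rfl
  rwa [hd2, map_ratCast] at this

variable {F : Type*} [Field F] [CharZero F] {f : ℝ × ℝ → F × F}

theorem injective (hf : PreservesRatSqDist f) : Function.Injective f := by
  intro u v hfuv
  by_contra huv
  have hρ := sqDist_pos_iff.2 huv
  obtain ⟨q, hq⟩ := exists_rat_gt ((sqDist u v - 1) ^ 2 / (4 * sqDist u v))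
  rw [div_lt_iff₀ (by positivity)] at hq
  obtain ⟨z, huz, hvz⟩ :=
    exists_sqDist_eq_sqDist_eq huv (α := q) (β := q + 1) (by linarith)
  have hfz : ((q : ℚ) : F) = ((q + 1 : ℚ) : F) := by
    rw [← hf u z q huz, hfuv, hf v z (q + 1) (by push_cast; exact hvz)]
  simp at hfz

theorem map_midpoint_of_sqDist_eq (hf : PreservesRatSqDist f) {x y : ℝ × ℝ} {q : ℚ}
    (hq : sqDist x y = q) : f (midpoint ℝ x y) = midpoint F (f x) (f y) := by
  by_cases hxy : x = y
  · simp [hxy]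
  have hq0 : (q : ℝ) ≠ 0 := hq ▸ (sqDist_pos_iff.2 hxy).ne'
  refine (midpoint_eq_of_add_self_eq (add_self_eq_add_of_sqDist_eq (a := ((q / 4 : ℚ) : F))
    (by simpa using hq0) (hf _ _ _ ?_) (hf _ _ _ ?_) ?_)).symm
  · rw [sqDist_midpoint_left, hq]; push_cast; ring
  · rw [sqDist_midpoint_right, hq]; push_cast; ring
  · rw [hf x y q hq]; push_cast; ring

theorem map_midpoint (hf : PreservesRatSqDist f) (x y : ℝ × ℝ) :
    f (midpoint ℝ x y) = midpoint F (f x) (f y) := by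
  by_cases hxy : x = y
  · simp [hxy]
  have hρ := sqDist_pos_iff.2 hxy
  obtain ⟨α, hα⟩ := exists_rat_gt (sqDist x y / 4)
  obtain ⟨c, hxc, hyc⟩ := exists_sqDist_eq_sqDist_eq hxy (α := α) (β := α) (by nlinarith)
  have side {u v : ℝ × ℝ} (h : sqDist u v = (α : ℝ) / 4) :
      sqDist (f u) (f v) = ((α / 4 : ℚ) : F) :=
    hf u v _ (by rw [h]; push_cast; rfl)
  have hmc : f (midpoint ℝ x y) ≠ f c := hf.injective.ne fun h => by
    have := sqDist_midpoint_left x y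
    rw [h, sqDist_comm, hxc] at this
    linarith
  have hm₁₂ : f (midpoint ℝ x c) ≠ f (midpoint ℝ y c) :=
    hf.injective.ne <| sqDist_pos_iff.1 <| by
      rw [midpoint_comm x c, midpoint_comm y c, sqDist_midpoint_midpoint_left]
      positivity
  have hα0 : ((α / 4 : ℚ) : F) ≠ 0 := by
    have : (0 : ℝ) < α := lt_of_le_of_lt (by positivity) hα
    exact Rat.cast_ne_zero.2 (div_ne_zero (by exact_mod_cast this.ne') four_ne_zero)
  rcases eq_or_add_eq_add_of_sqDist_eq hα0 hm₁₂
    (side (by rw [sqDist_midpoint_midpoint_left, hyc]))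
    (side (by rw [midpoint_comm x y, sqDist_midpoint_midpoint_left, hxc]))
    (side (by rw [sqDist_right_midpoint, hxc]))
    (side (by rw [sqDist_right_midpoint, hyc])) with h | h
  · exact absurd h hmc
  · rw [map_midpoint_of_sqDist_eq hf hxc, map_midpoint_of_sqDist_eq hf hyc] at h
    refine (midpoint_eq_of_add_self_eq ?_).symm
    linear_combination 2 * h + midpoint_add_self F (f x) (f c) + midpoint_add_self F (f y) (f c)

end PreservesRatSqDist

/-- `f : ℝ² → 𝔽²` preserves every distance `d > 0` with `d²` rational
(`|x-y| = d` implies `φ (f x) (f y) = d²`). -/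
theorem stmt_10 {F : Type*} [Field F] [Algebra ℝ F]
    (f : ℝ × ℝ → F × F)
    (hf : ∀ d : ℝ, 0 < d → (∃ q : ℚ, (q : ℝ) = d ^ 2) →
      ∀ x y : ℝ × ℝ, Real.sqrt ((x.1 - y.1) ^ 2 + (x.2 - y.2) ^ 2) = d →
        ((f x).1 - (f y).1) ^ 2 + ((f x).2 - (f y).2) ^ 2 = algebraMap ℝ F (d ^ 2))
    (A B C D : ℝ × ℝ) (r : ℚ) (h : D - C = (r : ℝ) • (B - A)) :
    f D - f C = (r : F) • (f B - f A) := by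
  have : CharZero F := charZero_of_injective_algebraMap (algebraMap ℝ F).injective
  have hf := PreservesRatSqDist.of_sqrt hf
  let G : ℝ × ℝ →+ F × F := AddMonoidHom.ofMapMidpoint ℝ F (fun w => f w - f 0) (sub_self _)
    fun x y => by
      rw [hf.map_midpoint, ← vsub_eq_sub, midpoint_vsub, midpoint_eq_smul_add, smul_add]; rfl
  have hG : ∀ w, G w = f w - f 0 := fun _ => rfl
  calc f D - f C = G D - G C := by rw [hG, hG, sub_sub_sub_cancel_right]
    _ = (r : F) • (G B - G A) := by rw [← map_sub, ← map_sub, h, map_ratCast_smul G ℝ F]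
    _ = (r : F) • (f B - f A) := by rw [hG, hG, sub_sub_sub_cancel_right]
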